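/- Let M be an n×n Hermitian complex matrix and let f : ℝ → ℝ be concave. Then for every index j ∈ {1,…,n}, (f(M))_{jj} ≤ f(M_{jj}), where f(M) is defined via the spectral decomposition of M (apply f to each eigenvalue). -/

import Mathlib

open MeasureTheory Filter Topology
open scoped ENNReal

noncomputable section

/-- The lattice `ℤ^d`. -/
abbrev Zd (d : ℕ) := Fin d → ℤ

/-- The Hilbert space `ℓ²(ℤ^d)`. -/
abbrev Hd (d : ℕ) := lp (fun _ : Zd d => ℂ) 2

variable {d : ℕ}

/-- The max (sup) norm `‖x‖ = max_i |x_i|` on `ℤ^d`, as a natural number. -/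
def natNorm (x : Zd d) : ℕ := Finset.univ.sup fun i => (x i).natAbs

/-- Distance between two subsets of `ℤ^d` (`0` by convention if one of them is empty). -/
def setDist (C₁ C₂ : Set (Zd d)) : ℕ :=
  sInf {n | ∃ x ∈ C₁, ∃ y ∈ C₂, natNorm (x - y) = n}

/-- Boundary `∂C = {x ∈ C : dist({x}, Cᶜ) = 1}`. -/
def bdry (C : Set (Zd d)) : Set (Zd d) := {x ∈ C | setDist {x} Cᶜ = 1}

/-- The standard basis vector `δ_x` of `ℓ²(ℤ^d)`. -/
def delta (x : Zd d) : Hd d := lp.single 2 x (1 : ℂ)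

/-- Matrix element `A(x,y) = ⟨δ_x, A δ_y⟩`. -/
def matElem (A : Hd d →L[ℂ] Hd d) (x y : Zd d) : ℂ :=
  @inner ℂ _ _ (delta x) (A (delta y))

lemma indicator_norm_le (C : Set (Zd d)) (f : Hd d) (i : Zd d) :
    ‖C.indicator ⇑f i‖ ≤ ‖(f : ∀ _ : Zd d, ℂ) i‖ := by
  by_cases hi : i ∈ C
  · simp [Set.indicator_of_mem hi]
  · simp [Set.indicator_of_notMem hi]

lemma memℓp_indicator (C : Set (Zd d)) (f : Hd d) : Memℓp (C.indicator ⇑f) 2 := by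
  refine memℓp_gen ?_
  have hf : Summable fun i => ‖(f : ∀ _ : Zd d, ℂ) i‖ ^ (2 : ℝ≥0∞).toReal :=
    (memℓp_gen_iff (by norm_num)).mp (lp.memℓp f)
  refine hf.of_nonneg_of_le (fun i => by positivity) fun i =>
    Real.rpow_le_rpow (norm_nonneg _) (indicator_norm_le C f i) (by norm_num)

/-- The multiplication operator by the indicator of `C ⊆ ℤ^d` (orthogonal projection onto
`ℓ²(C)`). -/
def chi (C : Set (Zd d)) : Hd d →L[ℂ] Hd d :=
  LinearMap.mkContinuous
    { toFun := fun f => (⟨C.indicator ⇑f, memℓp_indicator C f⟩ : Hd d)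
      map_add' := by
        intro f g
        apply Subtype.ext
        funext x
        by_cases hx : x ∈ C <;>
          simp [Set.indicator_of_mem, Set.indicator_of_notMem, hx, lp.coeFn_add]
          <;> exact congrFun (Set.indicator_add C (f : Zd d → ℂ) (g : Zd d → ℂ)) x
      map_smul' := by
        intro c f
        apply Subtype.ext
        funext x
        by_cases hx : x ∈ C <;>
          simp [Set.indicator_of_mem, Set.indicator_of_notMem, hx, lp.coeFn_smul] }
    1 (by
      intro f
      rw [one_mul]
      show ‖(⟨C.indicator ⇑f, memℓp_indicator C f⟩ : Hd d)‖ ≤ ‖f‖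
      by_contra hcon
      push_neg at hcon
      have h2 : (0:ℝ) < (2 : ℝ≥0∞).toReal := by norm_num
      have hlt : ‖f‖ ^ (2 : ℝ≥0∞).toReal
          < ‖(⟨C.indicator ⇑f, memℓp_indicator C f⟩ : Hd d)‖ ^ (2 : ℝ≥0∞).toReal :=
        Real.rpow_lt_rpow (norm_nonneg _) hcon h2
      have hle : ‖(⟨C.indicator ⇑f, memℓp_indicator C f⟩ : Hd d)‖ ^ (2 : ℝ≥0∞).toReal
          ≤ ‖f‖ ^ (2 : ℝ≥0∞).toReal := by
        rw [lp.norm_rpow_eq_tsum h2, lp.norm_rpow_eq_tsum h2 f]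
        exact Summable.tsum_le_tsum
          (fun i => Real.rpow_le_rpow (norm_nonneg _) (indicator_norm_le C f i) h2.le)
          ((memℓp_gen_iff h2).mp (lp.memℓp _)) ((memℓp_gen_iff h2).mp (lp.memℓp f))
      exact absurd hle (not_le.mpr hlt))

/-- `Π_{C₁,C₂} = χ_{C₁} P χ_{C₂} P χ_{C₁}`. -/
def PiOp (P : Hd d →L[ℂ] Hd d) (C₁ C₂ : Set (Zd d)) : Hd d →L[ℂ] Hd d :=
  chi C₁ ∘L P ∘L chi C₂ ∘L P ∘L chi C₁

/-- `Π_C = Π_{C,Cᶜ}`. -/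
def PiC (P : Hd d →L[ℂ] Hd d) (C : Set (Zd d)) : Hd d →L[ℂ] Hd d := PiOp P C Cᶜ

/-- `A` is an orthogonal projection. -/
def IsOrthoProj (P : Hd d →L[ℂ] Hd d) : Prop := IsSelfAdjoint P ∧ P ∘L P = P

/-- Trace of (the restriction to `ℓ²(C)` of) `A` over a subset `C ⊆ ℤ^d`:
`Σ_{x∈C} Re A(x,x)`. -/
def trSet (C : Set (Zd d)) (A : Hd d →L[ℂ] Hd d) : ℝ :=
  ∑' x : C, (matElem A x x).re

/-- `[0,∞]`-valued trace over a subset `C ⊆ ℤ^d`. -/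
def trSetNN (C : Set (Zd d)) (A : Hd d →L[ℂ] Hd d) : ℝ≥0∞ :=
  ∑' x : C, ENNReal.ofReal (matElem A x x).re

/-- The cube `Λ_M = ([−M,M] ∩ ℤ)^d`. -/
def cube (d M : ℕ) : Set (Zd d) := {x | ∀ i, |x i| ≤ (M : ℤ)}

/-- Condition 1 on the test function `f`, with exponent `α`. -/
def Condition1 (f : ℝ → ℝ) (α : ℝ) : Prop :=
  (0 < α ∧ α ≤ 1) ∧
  (∀ x : ℝ, x ∉ Set.Icc (0:ℝ) (1/4) → f x = 0) ∧
  ContDiffOn ℝ 2 f (Set.Ioc 0 (1/4)) ∧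
  ∃ Cf : ℝ, ∀ k : ℕ, k ≤ 2 → ∀ x ∈ Set.Ioc (0:ℝ) (1/4),
    |iteratedDerivWithin k f (Set.Ioc 0 (1/4)) x| * x ^ ((k : ℝ) - α) ≤ Cf

/-- A measure preserving ergodic action of `ℤ^d` on a probability space. -/
structure ErgAction (d : ℕ) {Ω : Type*} [MeasurableSpace Ω] (μ : Measure Ω)
    (T : Zd d → Ω → Ω) : Prop where
  measPres : ∀ a, MeasurePreserving (T a) μ μ
  base : T 0 = id
  add : ∀ a b, T (a + b) = T a ∘ T b
  ergodic : ∀ s : Set Ω, MeasurableSet s → (∀ a, T a ⁻¹' s = s) → μ s = 0 ∨ μ s = 1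

/-- Assumption 1: `P(ω)` is an ergodic family of orthogonal projections with exponentially
decaying expected matrix elements. -/
structure Assumption1 (d : ℕ) {Ω : Type*} [MeasurableSpace Ω] (μ : Measure Ω)
    (T : Zd d → Ω → Ω) (P : Ω → Hd d →L[ℂ] Hd d) (C₀ γ : ℝ) : Prop where
  act : ErgAction d μ T
  proj : ∀ᵐ ω ∂μ, IsOrthoProj (P ω)
  meas : ∀ x y, Measurable fun ω => matElem (P ω) x y
  covariant : ∀ a : Zd d, ∀ᵐ ω ∂μ, ∀ x y,
    matElem (P (T a ω)) x y = matElem (P ω) (x + a) (y + a)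
  γpos : 0 < γ
  decay : ∀ x y, ∫ ω, ‖matElem (P ω) x y‖ ∂μ
    ≤ C₀ * Real.exp (-γ * natNorm (x - y))


/-- The half-space `ℤ^d_+ = ([0,∞) ∩ ℤ) × ℤ^{d-1}` (first coordinate nonnegative). -/
def Zplus (d : ℕ) : Set (Zd d) := {x | ∀ i : Fin d, (i : ℕ) = 0 → 0 ≤ x i}

/-- The half-line `ℤ₋ = (−∞,0] ∩ ℤ`, inside `ℤ¹`. -/
def Zminus1 : Set (Zd 1) := {x | x 0 ≤ 0}

/-- The lattice point `j·e₁ ∈ ℤ^d`. -/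
def axisPt (d : ℕ) (j : ℕ) : Zd d := fun i => if (i : ℕ) = 0 then (j : ℤ) else 0

/-- The face `F_M^{(i,s)}` of the cube `Λ_M` (`s = true` for the `+` face). -/
def face (d M : ℕ) (i : Fin d) (s : Bool) : Set (Zd d) :=
  {x ∈ cube d M | x i = if s then (M : ℤ) else -(M : ℤ)}

/-- The truncated face `F̂_M^{(i,s)}` (points at distance `≥ 3ℓ` from all other faces). -/
def faceHat (d M ℓ : ℕ) (i : Fin d) (s : Bool) : Set (Zd d) :=
  {x ∈ face d M i s | ∀ j t, (j, t) ≠ (i, s) → 3 * ℓ ≤ setDist {x} (face d M j t)}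

/-- The surface layer `B_M^{(i,s)}`, the `ℓ`-neighborhood of `F̂_M^{(i,s)}` inside `Λ_M`. -/
def layer (d M ℓ : ℕ) (i : Fin d) (s : Bool) : Set (Zd d) :=
  {x ∈ cube d M | setDist {x} (faceHat d M ℓ i s) < ℓ}

/-- The lattice half-space `ℤ^d_{+,(i,s)}` containing `Λ_M` with `F_M^{(i,s)}` on its boundary. -/
def halfSp (d M : ℕ) (i : Fin d) (s : Bool) : Set (Zd d) :=
  {x | if s then x i ≤ (M : ℤ) else -(M : ℤ) ≤ x i}

/-- The error term `R_d(M) = (M^d e^{−αγℓ/2} + (d−1) ℓ² M^{d−2})²`. -/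
def RdErr (d M ℓ : ℕ) (α γ : ℝ) : ℝ :=
  ((M : ℝ) ^ d * Real.exp (-(α * γ * ℓ) / 2)
    + ((d : ℝ) - 1) * (ℓ : ℝ) ^ 2 * (M : ℝ) ^ (d - 2)) ^ 2


/-! In an eigenbasis, the `j`-th diagonal entry of `g(M)` is `∑ₖ |Uⱼₖ|² g(λₖ)`, where `U` is the
unitary matrix of eigenvectors. The weights `|Uⱼₖ|²` form a row of a unitary matrix, so they sum
to `1`; taking `g = f` and `g = id`, the claim is Jensen's inequality for these weights. -/

open scoped Matrix

namespace Matrix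

variable {𝕜 n : Type*} [RCLike 𝕜] [Fintype n] [DecidableEq n]

lemma mul_diagonal_mul_conjTranspose_apply_self (U : Matrix n n 𝕜) (w : n → ℝ) (i : n) :
    (U * diagonal (fun k => (w k : 𝕜)) * Uᴴ) i i = ((∑ k, ‖U i k‖ ^ 2 * w k : ℝ) : 𝕜) := by
  rw [mul_apply]
  simp only [mul_diagonal, conjTranspose_apply, RCLike.star_def,
    mul_right_comm _ _ (starRingEnd 𝕜 _), RCLike.mul_conj]
  norm_cast

lemma sum_norm_sq_apply_of_mem_unitaryGroup {U : Matrix n n 𝕜} (hU : U ∈ unitaryGroup n 𝕜)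
    (i : n) : ∑ k, ‖U i k‖ ^ 2 = 1 := by
  have h := U.mul_diagonal_mul_conjTranspose_apply_self 1 i
  simp only [Pi.one_apply, RCLike.ofReal_one, diagonal_one, mul_one] at h
  rw [← star_eq_conjTranspose, mem_unitaryGroup_iff.mp hU, one_apply_eq] at h
  exact_mod_cast h.symm

namespace IsHermitian

variable {A : Matrix n n 𝕜} (hA : A.IsHermitian)
include hA

lemma cfc_apply_self_eq_sum (f : ℝ → ℝ) (i : n) :
    hA.cfc f i i =
      ((∑ k, ‖(hA.eigenvectorUnitary : Matrix n n 𝕜) i k‖ ^ 2 * f (hA.eigenvalues k) : ℝ) : 𝕜) :=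
  mul_diagonal_mul_conjTranspose_apply_self _ _ i

lemma apply_self_eq_sum (i : n) :
    A i i =
      ((∑ k, ‖(hA.eigenvectorUnitary : Matrix n n 𝕜) i k‖ ^ 2 * hA.eigenvalues k : ℝ) : 𝕜) := by
  conv_lhs => rw [hA.spectral_theorem]
  exact mul_diagonal_mul_conjTranspose_apply_self _ _ i

end IsHermitian

end Matrix

theorem ConcaveOn.re_cfc_apply_self_le {𝕜 n : Type*} [RCLike 𝕜] [Fintype n] [DecidableEq n]
    {A : Matrix n n 𝕜} (hA : A.IsHermitian) {s : Set ℝ} {f : ℝ → ℝ} (hf : ConcaveOn ℝ s f)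
    (hs : ∀ k, hA.eigenvalues k ∈ s) (i : n) :
    RCLike.re (hA.cfc f i i) ≤ f (RCLike.re (A i i)) := by
  rw [hA.cfc_apply_self_eq_sum, hA.apply_self_eq_sum, RCLike.ofReal_re, RCLike.ofReal_re]
  exact hf.le_map_sum (fun k _ => sq_nonneg _)
    (Matrix.sum_norm_sq_apply_of_mem_unitaryGroup hA.eigenvectorUnitary.2 i) fun k _ => hs k

/-- Matrix Jensen inequality: for an `n×n` Hermitian matrix `M` and a concave
`f : ℝ → ℝ`, one has `(f(M))_{jj} ≤ f(M_{jj})` for every `j`. -/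
theorem statement7 {n : ℕ} (M : Matrix (Fin n) (Fin n) ℂ) (hM : M.IsHermitian)
    (f : ℝ → ℝ) (hf : ConcaveOn ℝ Set.univ f) (j : Fin n) :
    ((hM.cfc f) j j).re ≤ f ((M j j).re) :=
  hf.re_cfc_apply_self_le hM (fun _ => Set.mem_univ _) j

end
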